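/- arXiv:1810.07556 — 8 statements merged into one kernel-verified Lean document; each statement's English description precedes it below -/
import Mathlib

section
/- Let Y ⊆ ℝ^m be a closed subset for the Euclidean topology and let f = (f₁, …, f_n) : ℝ^m → ℝ^n be a map whose components are polynomials. Assume that for every j ∈ {1, …, m} the coordinate function Y → ℝ, y ↦ y_j, is integral over the ℝ-subalgebra of the ring of all real-valued functions on Y generated by the restrictions f₁|_Y, …, f_n|_Y. Then the restriction f|_Y : Y → ℝ^n is a proper map, i.e. the preimage under f|_Y of every compact subset of ℝ^n is compact; in particular f|_Y is a closed map for the Euclidean topology. -/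
/-!
At a point `y ∈ Y`, a monic equation for the coordinate `y ↦ y j` over the algebra generated by
the `f i|_Y` specialises to a monic equation for `y j` whose coefficients are polynomials in `f y`.
On `f|_Y⁻¹(K)` with `K` compact these coefficients are bounded, hence so is `y j` by Cauchy's
bound on the roots. So `f|_Y⁻¹(K)` is a closed bounded subset of `ℝ^m`, i.e. compact, and a proper
map into `ℝ^n` is closed.
-/

open Bornology Polynomial

theorem Polynomial.Monic.norm_lt_of_isRoot {K : Type*} [NormedDivisionRing K] {p : K[X]}
    (hp : p.Monic) {C : ℝ} (hC₀ : 0 ≤ C) (hC : ∀ k < p.natDegree, ‖p.coeff k‖ ≤ C) {a : K}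
    (ha : p.IsRoot a) : ‖a‖ < C + 1 := by
  have hbound : cauchyBound p ≤ ⟨C, hC₀⟩ + 1 := by
    rw [cauchyBound, hp.leadingCoeff, nnnorm_one, div_one]
    refine add_le_add_left (Finset.sup_le fun k hk => ?_) 1
    exact hC k (Finset.mem_range.1 hk)
  exact_mod_cast (ha.norm_lt_cauchyBound hp.ne_zero).trans_le hbound

theorem isBounded_image_of_isIntegralElem {α 𝕜 : Type*} [NormedField 𝕜] {S : Subring (α → 𝕜)}
    {s : Set α} (hS : ∀ a ∈ S, IsBounded (a '' s)) {h : α → 𝕜}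
    (hh : S.subtype.IsIntegralElem h) : IsBounded (h '' s) := by
  obtain ⟨p, hp, hph⟩ := hh
  obtain ⟨C, hC₀, hC⟩ : ∃ C > 0, ∀ z ∈ ⋃ k ∈ Finset.range p.natDegree,
      ((p.coeff k : S) : α → 𝕜) '' s, ‖z‖ ≤ C :=
    ((isBounded_biUnion_finset _).2 fun k _ => hS _ (p.coeff k).2).exists_pos_norm_le
  refine isBounded_iff_forall_norm_le.2 ⟨C + 1, ?_⟩
  rintro _ ⟨x, hx, rfl⟩
  let evalAt : S →+* 𝕜 := (Pi.evalRingHom _ x).comp S.subtype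
  have hroot : (p.map evalAt).IsRoot (h x) := by
    have h0 := congrArg (Pi.evalRingHom _ x) hph
    rwa [hom_eval₂, map_zero, ← eval_map] at h0
  refine ((hp.map evalAt).norm_lt_of_isRoot hC₀.le (fun k hk => ?_) hroot).le
  rw [hp.natDegree_map] at hk
  exact hC _ (Set.mem_biUnion (Finset.mem_range.2 hk) ⟨x, hx, (coeff_map evalAt k).symm⟩)

theorem exists_mvPolynomial_eval_eq_of_mem_adjoin_range {α ι R : Type*} [CommSemiring R]
    {g : ι → α → R} {a : α → R} (ha : a ∈ Algebra.adjoin R (Set.range g)) :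
    ∃ Q : MvPolynomial ι R, ∀ x, a x = MvPolynomial.eval (fun i => g i x) Q := by
  rw [Algebra.adjoin_range_eq_range_aeval] at ha
  obtain ⟨Q, rfl⟩ := ha
  refine ⟨Q, fun x => ?_⟩
  simp [MvPolynomial.aeval_def, MvPolynomial.eval₂_eq, MvPolynomial.eval_eq]

theorem isBounded_image_preimage_of_mem_adjoin_range {α ι 𝕜 : Type*} [NormedField 𝕜]
    {g : ι → α → 𝕜} {a : α → 𝕜} (ha : a ∈ Algebra.adjoin 𝕜 (Set.range g))
    {K : Set (ι → 𝕜)} (hK : IsCompact K) :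
    IsBounded (a '' ((fun x i => g i x) ⁻¹' K)) := by
  obtain ⟨Q, hQ⟩ := exists_mvPolynomial_eval_eq_of_mem_adjoin_range ha
  refine (hK.image (MvPolynomial.continuous_eval Q)).isBounded.subset ?_
  rintro _ ⟨x, hx, rfl⟩
  exact ⟨_, hx, (hQ x).symm⟩

/-- Let `Y ⊆ ℝ^m` be a Euclidean-closed subset and
`F : ℝ^m → ℝ^n` a polynomial map (components given by `P j : MvPolynomial (Fin m) ℝ`).
If every coordinate function `y ↦ y j` of `Y` is integral over the `ℝ`-subalgebra of the
ring of all real-valued functions on `Y` generated by the restrictions to `Y` of the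
components of `F`, then the restriction `F|_Y : Y → ℝⁿ` is proper (preimages of compact
sets are compact) and, in particular, it is a closed map for the Euclidean topology. -/
theorem finite_polynomial_map_isProper_isClosed {m n : ℕ}
    (Y : Set (Fin m → ℝ)) (hY : IsClosed Y)
    (P : Fin n → MvPolynomial (Fin m) ℝ)
    (hint : ∀ j : Fin m,
      ((Algebra.adjoin ℝ
          (Set.range fun i : Fin n => fun y : Y => MvPolynomial.eval (y : Fin m → ℝ) (P i))
        : Subalgebra ℝ (Y → ℝ)).toSubring.subtype).IsIntegralElem
        (fun y : Y => (y : Fin m → ℝ) j)) :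
    (∀ K : Set (Fin n → ℝ), IsCompact K →
      IsCompact ((fun y : Y => fun i : Fin n => MvPolynomial.eval (y : Fin m → ℝ) (P i)) ⁻¹' K)) ∧
    IsClosedMap (fun y : Y => fun i : Fin n => MvPolynomial.eval (y : Fin m → ℝ) (P i)) := by
  set f : Y → (Fin n → ℝ) := fun y i => MvPolynomial.eval (y : Fin m → ℝ) (P i)
  have hf : Continuous f :=
    continuous_pi fun i => (MvPolynomial.continuous_eval (P i)).comp continuous_subtype_val
  have hpre : ∀ K : Set (Fin n → ℝ), IsCompact K → IsCompact (f ⁻¹' K) := by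
    intro K hK
    rw [Subtype.isCompact_iff]
    refine Metric.isCompact_of_isClosed_isBounded
      (hY.isClosedEmbedding_subtypeVal.isClosedMap _ (hK.isClosed.preimage hf))
      (forall_isBounded_image_eval_iff.1 fun j => ?_)
    rw [Set.image_image]
    exact isBounded_image_of_isIntegralElem
      (fun a ha => isBounded_image_preimage_of_mem_adjoin_range ha hK) (hint j)
  exact ⟨hpre, (isProperMap_iff_isCompact_preimage.2 ⟨hf, hpre⟩).isClosedMap⟩
end

section
/- Let A be a commutative ring and let m be a maximal ideal of A. Then m is a real ideal if and only if m contains no element of the form 1 + s, where s is a sum of squares of elements of A. -/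
/-!
Being real amounts to: `a ^ 2 + s ∈ I` with `s` a sum of squares forces `a ∈ I`. Taking `a = 1`
shows that a real proper ideal contains no `1 + s`. Conversely, modulo a maximal ideal `m` every
`a ∉ m` has an inverse `r`, and multiplying `a ^ 2 + s ∈ m` by `r ^ 2` gives `1 + r ^ 2 s ∈ m`,
where `r ^ 2 s` is again a sum of squares.
-/

def IsRealIdeal {A : Type*} [CommRing A] (I : Ideal A) : Prop :=
  ∀ (n : ℕ) (a : Fin n → A), (∑ i, a i ^ 2) ∈ I → ∀ i, a i ∈ I

theorem IsSumSq.exists_eq_sum_fin_sq {R : Type*} [Semiring R] {s : R} (hs : IsSumSq s) :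
    ∃ (n : ℕ) (f : Fin n → R), s = ∑ i, f i ^ 2 := by
  induction hs with
  | zero => exact ⟨0, ![], by simp⟩
  | sq_add a _ ih =>
    obtain ⟨n, f, rfl⟩ := ih
    exact ⟨n + 1, Fin.cons a f, by simp [Fin.sum_univ_succ, sq]⟩

theorem isRealIdeal_iff_mem_of_sq_add_mem {A : Type*} [CommRing A] (I : Ideal A) :
    IsRealIdeal I ↔ ∀ a s : A, IsSumSq s → a ^ 2 + s ∈ I → a ∈ I := by
  constructor
  · intro hI a s hs has
    obtain ⟨n, f, rfl⟩ := hs.exists_eq_sum_fin_sq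
    exact hI (n + 1) (Fin.cons a f) (by simpa [Fin.sum_univ_succ] using has) 0
  · intro hI n a hsum j
    refine hI (a j) _ (IsSumSq.sum_sq (Finset.univ.erase j) a) ?_
    rwa [Finset.add_sum_erase _ (fun i ↦ a i ^ 2) (Finset.mem_univ j)]

theorem Ideal.IsMaximal.exists_isSumSq_one_add_mem {A : Type*} [CommRing A] {m : Ideal A}
    (hm : m.IsMaximal) {a s : A} (hs : IsSumSq s) (ha : a ∉ m) (has : a ^ 2 + s ∈ m) :
    ∃ t, IsSumSq t ∧ 1 + t ∈ m := by
  obtain ⟨r, x, hx, hrx⟩ := hm.exists_inv ha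
  refine ⟨r ^ 2 * s, (IsSquare.sq r).isSumSq.mul hs, ?_⟩
  have hdecomp : 1 + r ^ 2 * s = r ^ 2 * (a ^ 2 + s) + x * (2 - x) := by
    linear_combination (-(1 - x + r * a)) * hrx
  rw [hdecomp]
  exact m.add_mem (m.mul_mem_left _ has) (m.mul_mem_right _ hx)

/-- A maximal ideal `m` of a commutative ring `A` is a real ideal if and
only if `m` contains no element of the form `1 + s` with `s` a sum of squares in `A`. -/
theorem isRealIdeal_maximal_iff {A : Type*} [CommRing A] (m : Ideal A) (hm : m.IsMaximal) :
    IsRealIdeal m ↔ ∀ s : A, IsSumSq s → 1 + s ∉ m := by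
  rw [isRealIdeal_iff_mem_of_sq_add_mem]
  constructor
  · intro hm_real s hs h1s
    exact hm.ne_top ((Ideal.eq_top_iff_one m).mpr (hm_real 1 s hs (by rwa [one_pow])))
  · intro hno a s hs has
    by_contra ha
    obtain ⟨t, ht, h1t⟩ := hm.exists_isSumSq_one_add_mem hs ha has
    exact hno t ht h1t
end

section
/- Let A be a commutative ring and let O(A) = (1+ΣA²)⁻¹A be the localization of A at the multiplicative subset of elements of the form 1 plus a sum of squares of elements of A. Then every maximal ideal of O(A) is a real ideal. -/
theorem isSumSq_sq_mul {R : Type*} [CommRing R] (a : R) {t : R} (ht : IsSumSq t) :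
    IsSumSq (a * a * t) := by
  induction ht with
  | zero => simpa using IsSumSq.zero
  | @sq_add b T pT ih =>
    have h2 : a * a * (b * b + T) = (a * b) * (a * b) + a * a * T := by ring
    rw [h2]
    exact IsSumSq.sq_add _ ih

theorem isSumSq_mul {R : Type*} [CommRing R] {s t : R} (hs : IsSumSq s) (ht : IsSumSq t) :
    IsSumSq (s * t) := by
  induction hs with
  | zero => simpa using IsSumSq.zero
  | @sq_add a S pS ih =>
    have h : (a * a + S) * t = (a * a) * t + S * t := by ring
    rw [h]
    exact (isSumSq_sq_mul a ht).add ih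

/-- The multiplicative subset `1 + ΣA²` of elements of the form `1` plus a sum of squares. -/
def oneAddSumSq (A : Type*) [CommRing A] : Submonoid A where
  carrier := {x | ∃ s, IsSumSq s ∧ x = 1 + s}
  one_mem' := ⟨0, IsSumSq.zero, by ring⟩
  mul_mem' := by
    rintro x y ⟨s, hs, rfl⟩ ⟨t, ht, rfl⟩
    exact ⟨s + t + s * t, (hs.add ht).add (isSumSq_mul hs ht), by ring⟩

theorem IsRealIdeal.of_isMaximal {R : Type*} [CommRing R]
    (hunit : ∀ σ : R, IsSumSq σ → IsUnit (1 + σ)) {M : Ideal R} (hM : M.IsMaximal) :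
    IsRealIdeal M := by
  intro n a hsum i
  by_contra hai
  obtain ⟨b, m, hm, hbm⟩ := hM.exists_inv hai
  set σ := ∑ j ∈ Finset.univ.erase i, (b * a j) ^ 2
  have hsplit : b ^ 2 * ∑ j, a j ^ 2 = (b * a i) ^ 2 + σ := by
    rw [Finset.mul_sum, ← Finset.add_sum_erase _ _ (Finset.mem_univ i)]
    simp only [σ, mul_pow]
  have hσ : 1 + σ = b ^ 2 * ∑ j, a j ^ 2 + m * (2 - m) := by
    linear_combination -hsplit - (1 - m + b * a i) * hbm
  have hmem : 1 + σ ∈ M := hσ ▸ M.add_mem (M.mul_mem_left _ hsum) (M.mul_mem_right _ hm)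
  exact hM.ne_top (M.eq_top_of_isUnit_mem hmem (hunit σ (IsSumSq.sum_sq _ _)))

namespace Localization

variable {A : Type*} [CommRing A]

theorem exists_eq_mk_mul_self_of_isSumSq {S : Submonoid A} {σ : Localization S}
    (hσ : IsSumSq σ) : ∃ (t : A) (d : S), IsSumSq t ∧ σ = mk t (d * d) := by
  induction hσ with
  | zero => exact ⟨0, 1, IsSumSq.zero, (mk_zero _).symm⟩
  | @sq_add a σ _ ih =>
    obtain ⟨t, d, ht, rfl⟩ := ih
    obtain ⟨x, u, rfl⟩ : ∃ (x : A) (u : S), mk x u = a := induction_on a fun y => ⟨y.1, y.2, rfl⟩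
    refine ⟨(x * d) * (x * d) + u * u * t, u * d, IsSumSq.sq_add _ (isSumSq_sq_mul _ ht), ?_⟩
    rw [mk_mul, add_mk]
    congr 1
    · push_cast; ring
    · ext; push_cast; ring

theorem isUnit_mk_of_mem {S : Submonoid A} {a : A} (ha : a ∈ S) (s : S) : IsUnit (mk a s) :=
  isUnit_iff_exists_inv.2 ⟨mk s ⟨a, ha⟩, by rw [mk_mul, mul_comm a]; exact mk_self (s * ⟨a, ha⟩)⟩

end Localization

theorem add_mem_oneAddSumSq {A : Type*} [CommRing A] {x t : A} (hx : x ∈ oneAddSumSq A)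
    (ht : IsSumSq t) : x + t ∈ oneAddSumSq A := by
  obtain ⟨s, hs, rfl⟩ := hx
  exact ⟨s + t, hs.add ht, by ring⟩

theorem isUnit_one_add_of_isSumSq {A : Type*} [CommRing A] {σ : Localization (oneAddSumSq A)}
    (hσ : IsSumSq σ) : IsUnit (1 + σ) := by
  obtain ⟨t, d, ht, rfl⟩ := Localization.exists_eq_mk_mul_self_of_isSumSq hσ
  rw [← Localization.mk_self (d * d), Localization.add_mk_self]
  exact Localization.isUnit_mk_of_mem (add_mem_oneAddSumSq (d * d).2 ht) _

/-- Every maximal ideal of the localization `O(A) = (1+ΣA²)⁻¹A` is a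
real ideal. -/
theorem isRealIdeal_of_isMaximal_ringOfRegular {A : Type*} [CommRing A]
    (M : Ideal (Localization (oneAddSumSq A))) (hM : M.IsMaximal) :
    IsRealIdeal M :=
  IsRealIdeal.of_isMaximal (fun _ => isUnit_one_add_of_isSumSq) hM
end

section
/- Let A be a commutative ring and p a real prime ideal of A. Then p is disjoint from 1+ΣA², the extension p·O(A) of p in the localization O(A) = (1+ΣA²)⁻¹A is a prime ideal, and the canonical ring homomorphism A_p → O(A)_{p·O(A)} between the localization of A at p and the localization of O(A) at p·O(A) is an isomorphism. -/
/-! Since `1 * 1 + s` lies in a real ideal only if `1` does, a proper real ideal misses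
`1 + ΣA²`, so it extends to a prime of `O(A)` contracting back to it; localizing first at
`1 + ΣA²` and then at that prime is the same as localizing at the original prime. -/

theorem IsSumSq.exists_eq_sum_sq {R : Type*} [CommSemiring R] {s : R} (hs : IsSumSq s) :
    ∃ (n : ℕ) (a : Fin n → R), s = ∑ i, a i ^ 2 := by
  induction hs with
  | zero => exact ⟨0, ![], by simp⟩
  | @sq_add b t _ ih =>
    obtain ⟨n, a, rfl⟩ := ih
    exact ⟨n + 1, Fin.cons b a, by simp [Fin.sum_univ_succ, sq]⟩

namespace IsRealIdeal

variable {A : Type*} [CommRing A] {I : Ideal A}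

theorem mem_of_mul_self_add_mem (hI : IsRealIdeal I) {a s : A} (hs : IsSumSq s)
    (h : a * a + s ∈ I) : a ∈ I := by
  obtain ⟨n, b, rfl⟩ := hs.exists_eq_sum_sq
  have hsum : ∑ i, (Fin.cons a b : Fin (n + 1) → A) i ^ 2 ∈ I := by
    simpa [Fin.sum_univ_succ, sq] using h
  simpa using hI (n + 1) (Fin.cons a b) hsum 0

theorem one_add_notMem (hI : IsRealIdeal I) (hne : I ≠ ⊤) {s : A} (hs : IsSumSq s) :
    1 + s ∉ I := fun h =>
  hne <| I.eq_top_iff_one.mpr <| hI.mem_of_mul_self_add_mem hs <| by rwa [one_mul]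

theorem disjoint_oneAddSumSq (hI : IsRealIdeal I) (hne : I ≠ ⊤) :
    Disjoint (oneAddSumSq A : Set A) I := by
  rw [Set.disjoint_left]
  rintro _ ⟨s, hs, rfl⟩
  exact hI.one_add_notMem hne hs

end IsRealIdeal

theorem Localization.localRingHom_algebraMap_bijective {R S : Type*} [CommRing R] [CommRing S]
    [Algebra R S] (M : Submonoid R) [IsLocalization M S] (p : Ideal R) [p.IsPrime]
    (q : Ideal S) [q.IsPrime] (hc : p = q.comap (algebraMap R S)) :
    Function.Bijective (localRingHom p q (algebraMap R S) hc) := by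
  subst hc
  have := IsLocalization.isLocalization_isLocalization_atPrime_isLocalization M
    (Localization.AtPrime q) q
  let e := IsLocalization.algEquiv (q.comap (algebraMap R S)).primeCompl
    (Localization.AtPrime (q.comap (algebraMap R S))) (Localization.AtPrime q)
  have he : localRingHom _ q (algebraMap R S) rfl = e :=
    localRingHom_unique _ _ _ _ fun x => by
      simp [e, ← IsScalarTower.algebraMap_apply]
  rw [he]
  exact e.bijective

/-- Let `p` be a real prime ideal of `A`. Then `p` is disjoint from
`1+ΣA²`, the extension `p·O(A)` in `O(A) = (1+ΣA²)⁻¹A` is prime, and the canonical map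
`A_p → O(A)_{p·O(A)}` between the localizations is an isomorphism (bijective). -/
theorem localization_at_real_prime {A : Type*} [CommRing A]
    (p : Ideal A) [hp : p.IsPrime] (hreal : IsRealIdeal p) :
    (∀ s : A, IsSumSq s → 1 + s ∉ p) ∧
    (p.map (algebraMap A (Localization (oneAddSumSq A)))).IsPrime ∧
    ∀ (hP : (p.map (algebraMap A (Localization (oneAddSumSq A)))).IsPrime)
      (hc : p = (p.map (algebraMap A (Localization (oneAddSumSq A)))).comap
        (algebraMap A (Localization (oneAddSumSq A)))),
      Function.Bijective
        (@Localization.localRingHom A _ (Localization (oneAddSumSq A)) _ p hp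
          (p.map (algebraMap A (Localization (oneAddSumSq A)))) hP
          (algebraMap A (Localization (oneAddSumSq A))) hc) :=
  ⟨fun _ => hreal.one_add_notMem hp.ne_top,
    IsLocalization.isPrime_of_isPrime_disjoint _ _ p hp (hreal.disjoint_oneAddSumSq hp.ne_top),
    fun _ => Localization.localRingHom_algebraMap_bijective (oneAddSumSq A) p _⟩
end

section
/- Let A be a reduced commutative ring with finitely many minimal prime ideals, all of which are real ideals (condition (MP)). Let K be the total ring of fractions of A, let A' be the integral closure of A in K, and let B be a ring with A ⊆ B ⊆ A'. Then B is reduced and has finitely many minimal prime ideals, all of which are real ideals, and the map q ↦ q ∩ A is a bijection from the set of minimal prime ideals of B onto the set of minimal prime ideals of A. -/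
theorem IsRealIdeal.comap {R S : Type*} [CommRing R] [CommRing S] (f : R →+* S) {I : Ideal S}
    (hI : IsRealIdeal I) : IsRealIdeal (I.comap f) := by
  intro n a ha i
  refine hI n (fun j => f (a j)) ?_ i
  simpa only [Ideal.mem_comap, map_sum, map_pow] using ha

theorem IsRealIdeal.of_comap_isLocalization {R S : Type*} [CommRing R] [CommRing S] [Algebra R S]
    (M : Submonoid R) [IsLocalization M S] {Q : Ideal S}
    (hQ : IsRealIdeal (Q.comap (algebraMap R S))) : IsRealIdeal Q := by
  intro n a ha i
  obtain ⟨s, b, hb⟩ :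
      ∃ s : M, ∃ b : Fin n → R, ∀ j, algebraMap R S (b j) = (s : R) • a j := by
    obtain ⟨s, hs⟩ := IsLocalization.exist_integer_multiples_of_finite M a
    choose b hb using hs
    exact ⟨s, b, hb⟩
  have hsum : (∑ j, b j ^ 2) ∈ Q.comap (algebraMap R S) := by
    have hsq : ∀ j, algebraMap R S (b j ^ 2) = algebraMap R S s ^ 2 * a j ^ 2 := fun j => by
      rw [map_pow, hb j, Algebra.smul_def, mul_pow]
    rw [Ideal.mem_comap, map_sum, Finset.sum_congr rfl fun j _ => hsq j, ← Finset.mul_sum]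
    exact Q.mul_mem_left _ ha
  have hsa : algebraMap R S s * a i ∈ Q := by
    simpa only [Ideal.mem_comap, hb i, Algebra.smul_def] using hQ n b hsum i
  exact (Q.unit_mul_mem_iff_mem (IsLocalization.map_units S s)).mp hsa

theorem IsLocalization.bijOn_comap_minimalPrimes {R S : Type*} [CommRing R] [CommRing S]
    [Algebra R S] (M : Submonoid R) [IsLocalization M S]
    (hinj : Function.Injective (algebraMap R S)) :
    Set.BijOn (Ideal.comap (algebraMap R S)) (minimalPrimes S) (minimalPrimes R) := by
  have himage := IsLocalization.minimalPrimes_comap M S ⊥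
  rw [Ideal.comap_bot_of_injective _ hinj] at himage
  change Set.BijOn _ (⊥ : Ideal S).minimalPrimes (⊥ : Ideal R).minimalPrimes
  rw [himage]
  exact ((IsLocalization.orderEmbedding M S).injective.injOn).bijOn_image

instance Subalgebra.isLocalization_algebraMapSubmonoid {R S : Type*} [CommRing R] [CommRing S]
    [Algebra R S] (M : Submonoid R) [IsLocalization M S] (B : Subalgebra R S) :
    IsLocalization (Algebra.algebraMapSubmonoid B M) S where
  map_units := by
    rintro ⟨_, m, hm, rfl⟩
    rw [← IsScalarTower.algebraMap_apply]
    exact IsLocalization.map_units S ⟨m, hm⟩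
  surj z := by
    obtain ⟨⟨a, m⟩, hz⟩ := IsLocalization.surj M z
    exact ⟨⟨algebraMap R B a, algebraMap R B m, m, m.2, rfl⟩,
      by simpa only [← IsScalarTower.algebraMap_apply] using hz⟩
  exists_of_eq h := ⟨1, by rw [Subtype.val_injective h]⟩

theorem mp_of_intermediate_integral_extension_general {A : Type*} [CommRing A] [IsReduced A]
    (hfin : (minimalPrimes A).Finite)
    (hreal : ∀ p ∈ minimalPrimes A, IsRealIdeal p)
    (B : Subalgebra A (FractionRing A)) :
    IsReduced B ∧ (minimalPrimes B).Finite ∧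
    (∀ q ∈ minimalPrimes (↥B), IsRealIdeal q) ∧
    Set.BijOn (fun q : Ideal B => q.comap (algebraMap A B))
      (minimalPrimes (↥B)) (minimalPrimes A) := by
  set K := FractionRing A
  have hAK := IsLocalization.bijOn_comap_minimalPrimes (nonZeroDivisors A) (S := K)
    (IsFractionRing.injective A K)
  have hBK := IsLocalization.bijOn_comap_minimalPrimes
    (Algebra.algebraMapSubmonoid B (nonZeroDivisors A)) (S := K) Subtype.val_injective
  have hcomp : Ideal.comap (algebraMap A B) ∘ Ideal.comap (algebraMap B K) =
      Ideal.comap (algebraMap A K) := funext fun Q => by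
    rw [Function.comp_apply, Ideal.comap_comap, ← IsScalarTower.algebraMap_eq]
  have hBA : Set.BijOn (Ideal.comap (algebraMap A B)) (minimalPrimes B) (minimalPrimes A) := by
    rw [← hBK.image_eq, ← Set.bijOn_comp_iff hBK.injOn, hcomp]
    exact hAK
  refine ⟨isReduced_of_injective (algebraMap B K) Subtype.val_injective,
    hBA.finite_iff_finite.mpr hfin, ?_, hBA⟩
  rw [← hBK.image_eq]
  rintro _ ⟨Q, hQ, rfl⟩
  exact ((hreal _ (hAK.mapsTo hQ)).of_comap_isLocalization (nonZeroDivisors A)).comap _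

/-- Let `A` satisfy condition (MP): `A` is reduced with finitely many
minimal primes, all real. Let `K` be the total ring of fractions of `A`, `A'` the integral
closure of `A` in `K`, and `B` an intermediate ring `A ⊆ B ⊆ A'`. Then `B` also satisfies
(MP) — `B` is reduced, has finitely many minimal primes, all of them real — and contraction
`q ↦ q ∩ A` is a bijection from the minimal primes of `B` onto the minimal primes of `A`. -/
theorem mp_of_intermediate_integral_extension {A : Type*} [CommRing A] [IsReduced A]
    (hfin : (minimalPrimes A).Finite)
    (hreal : ∀ p ∈ minimalPrimes A, IsRealIdeal p)
    (B : Subalgebra A (FractionRing A))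
    (hB : B ≤ integralClosure A (FractionRing A)) :
    IsReduced B ∧ (minimalPrimes B).Finite ∧
    (∀ q ∈ minimalPrimes (↥B), IsRealIdeal q) ∧
    Set.BijOn (fun q : Ideal B => q.comap (algebraMap A B))
      (minimalPrimes (↥B)) (minimalPrimes A) :=
  mp_of_intermediate_integral_extension_general hfin hreal B
end

section
/- Let A be a commutative ring satisfying condition (MP), with total ring of fractions K, let A' be the integral closure of A in K, and let B be a ring with A ⊆ B ⊆ A'. Assume the extension A → B is biregular, i.e. the subrings O(A) = (1+ΣA²)⁻¹A and O(B) = {b/t : b ∈ B, t ∈ 1+ΣB²} of K coincide. Then for every real prime ideal p of A there is exactly one prime ideal q of B lying over p; moreover this q is a real ideal and the canonical homomorphism A_p → B_q is an isomorphism. -/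
/-- Given a ring homomorphism `f : A →+* K`, the subring `O(A)` of `K` consisting of the
"fractions" `f a / f (1 + s)` with `s` a sum of squares, described without inverses as the
set of `x : K` with `f (1 + s) * x = f a`. -/
def ringO {A K : Type*} [CommRing A] [CommRing K] (f : A →+* K) : Subring K where
  carrier := {x | ∃ a s : A, IsSumSq s ∧ f (1 + s) * x = f a}
  zero_mem' := ⟨0, 0, IsSumSq.zero, by simp⟩
  one_mem' := ⟨1, 0, IsSumSq.zero, by simp⟩
  neg_mem' := by
    rintro x ⟨a, s, hs, hx⟩
    exact ⟨-a, s, hs, by rw [mul_neg, hx, map_neg]⟩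
  add_mem' := by
    rintro x y ⟨a, s, hs, hx⟩ ⟨b, t, ht, hy⟩
    refine ⟨(1 + t) * a + (1 + s) * b, s + t + s * t, (hs.add ht).add (isSumSq_mul hs ht), ?_⟩
    have h1 : (1 : A) + (s + t + s * t) = (1 + s) * (1 + t) := by ring
    rw [h1, map_mul]
    have h2 : f (1 + s) * f (1 + t) * (x + y)
        = f (1 + t) * (f (1 + s) * x) + f (1 + s) * (f (1 + t) * y) := by ring
    rw [h2, hx, hy, ← map_mul, ← map_mul, ← map_add]
  mul_mem' := by
    rintro x y ⟨a, s, hs, hx⟩ ⟨b, t, ht, hy⟩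
    refine ⟨a * b, s + t + s * t, (hs.add ht).add (isSumSq_mul hs ht), ?_⟩
    have h1 : (1 : A) + (s + t + s * t) = (1 + s) * (1 + t) := by ring
    rw [h1, map_mul]
    have h2 : f (1 + s) * f (1 + t) * (x * y) = (f (1 + s) * x) * (f (1 + t) * y) := by ring
    rw [h2, hx, hy, ← map_mul]

lemma IsSumSq.exists_fin {A : Type*} [CommSemiring A] {s : A} (hs : IsSumSq s) :
    ∃ (n : ℕ) (a : Fin n → A), s = ∑ i, a i ^ 2 := by
  induction hs with
  | zero => exact ⟨0, ![], by simp⟩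
  | @sq_add a S _ ih =>
    obtain ⟨n, b, rfl⟩ := ih
    exact ⟨n + 1, Fin.cons a b, by simp [Fin.sum_univ_succ, sq]⟩

lemma IsRealIdeal.one_add_notMem_s10 {A : Type*} [CommRing A] {I : Ideal A} (hI : IsRealIdeal I)
    (hne : I ≠ ⊤) {s : A} (hs : IsSumSq s) : 1 + s ∉ I := by
  intro h
  obtain ⟨n, a, rfl⟩ := hs.exists_fin
  have hsum : (∑ i, (Fin.cons 1 a : Fin (n + 1) → A) i ^ 2) ∈ I := by
    simpa [Fin.sum_univ_succ] using h
  exact hne <| (Ideal.eq_top_iff_one I).mpr <| by simpa using hI _ _ hsum 0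

/-- The inclusion `B ⊆ O(A)`, stated without inverses. -/
def RingHom.HasSumSqFractions {A B : Type*} [CommRing A] [CommRing B] (g : A →+* B) : Prop :=
  ∀ b : B, ∃ a s : A, IsSumSq s ∧ g (1 + s) * b = g a

lemma Ideal.mem_iff_of_comap_eq {A B : Type*} [CommRing A] [CommRing B] {g : A →+* B}
    {p : Ideal A} (hp : ∀ s, IsSumSq s → 1 + s ∉ p) {q : Ideal B} [q.IsPrime]
    (hq : q.comap g = p) {b : B} {a s : A} (hs : IsSumSq s) (h : g (1 + s) * b = g a) :
    b ∈ q ↔ a ∈ p := by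
  rw [← hq, Ideal.mem_comap, ← h]
  refine ⟨fun hb => q.mul_mem_left _ hb, fun hab => ?_⟩
  refine (Ideal.IsPrime.mem_or_mem ‹_› hab).resolve_left fun hs' => hp s hs ?_
  rwa [← hq]

namespace RingHom.HasSumSqFractions

variable {A B : Type*} [CommRing A] [CommRing B] {g : A →+* B} (hg : g.HasSumSqFractions)
include hg

lemma exists_common_denom {n : ℕ} (b : Fin n → B) :
    ∃ (S : A) (c : Fin n → A), IsSumSq S ∧ ∀ i, g (1 + S) * b i = g (c i) := by
  induction n with
  | zero => exact ⟨0, ![], IsSumSq.zero, fun i => i.elim0⟩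
  | succ n ih =>
    obtain ⟨S, c, hS, hc⟩ := ih (fun i => b i.succ)
    obtain ⟨a, s, hs, ha⟩ := hg (b 0)
    have hprod : (1 : A) + (S + s + S * s) = (1 + S) * (1 + s) := by ring
    refine ⟨S + s + S * s, Fin.cons ((1 + S) * a) (fun i => (1 + s) * c i),
      (hS.add hs).add (hS.mul hs), Fin.cases ?_ fun j => ?_⟩
    · rw [Fin.cons_zero, hprod, map_mul, map_mul, mul_assoc, ha]
    · rw [Fin.cons_succ, hprod, map_mul, map_mul, mul_comm (g _), mul_assoc, hc j]

lemma eq_of_comap_eq {p : Ideal A} (hp : ∀ s, IsSumSq s → 1 + s ∉ p) {q₁ q₂ : Ideal B}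
    [q₁.IsPrime] [q₂.IsPrime] (h₁ : q₁.comap g = p) (h₂ : q₂.comap g = p) : q₁ = q₂ := by
  ext b
  obtain ⟨a, s, hs, h⟩ := hg b
  rw [Ideal.mem_iff_of_comap_eq hp h₁ hs h, Ideal.mem_iff_of_comap_eq hp h₂ hs h]

lemma isRealIdeal_of_comap_eq {p : Ideal A} (hpr : IsRealIdeal p) (hp : p ≠ ⊤) {q : Ideal B}
    [q.IsPrime] (hq : q.comap g = p) : IsRealIdeal q := by
  have hsos : ∀ s, IsSumSq s → 1 + s ∉ p := fun _ => hpr.one_add_notMem_s10 hp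
  intro n b hb i
  obtain ⟨S, c, hS, hc⟩ := hg.exists_common_denom b
  have hsum : g (1 + (S + S + S * S)) * ∑ j, b j ^ 2 = g (∑ j, c j ^ 2) := by
    have hsq : (1 : A) + (S + S + S * S) = (1 + S) ^ 2 := by ring
    simp only [hsq, map_sum, map_pow, Finset.mul_sum, ← mul_pow, hc]
  have hcp := (Ideal.mem_iff_of_comap_eq hsos hq ((hS.add hS).add (hS.mul hS)) hsum).mp hb
  exact (Ideal.mem_iff_of_comap_eq hsos hq hS (hc i)).mpr (hpr n c hcp i)

variable {p : Ideal A} [p.IsPrime] (hp : ∀ s, IsSumSq s → 1 + s ∉ p) {q : Ideal B} [q.IsPrime]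
  (hc : p = q.comap g)
include hp

lemma localRingHom_injective (hinj : Function.Injective g) :
    Function.Injective (Localization.localRingHom p q g hc) := by
  rw [injective_iff_map_eq_zero]
  intro x hx
  obtain ⟨⟨a, u⟩, rfl⟩ := IsLocalization.mk'_surjective p.primeCompl x
  rw [Localization.localRingHom_mk', IsLocalization.mk'_eq_zero_iff] at hx
  obtain ⟨⟨d, hd⟩, hda⟩ := hx
  obtain ⟨e, s, hs, hes⟩ := hg d
  have he : e ∉ p := fun h => hd ((Ideal.mem_iff_of_comap_eq hp hc.symm hs hes).mpr h)
  have hea : e * a = 0 := hinj <| by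
    rw [map_mul, ← hes, mul_assoc, hda, mul_zero, map_zero]
  exact IsLocalization.mk'_eq_zero_iff _ _ |>.mpr ⟨⟨e, he⟩, hea⟩

lemma localRingHom_surjective : Function.Surjective (Localization.localRingHom p q g hc) := by
  intro y
  obtain ⟨⟨b, u⟩, rfl⟩ := IsLocalization.mk'_surjective q.primeCompl y
  obtain ⟨a, s, hs, has⟩ := hg b
  obtain ⟨e, t, ht, het⟩ := hg u
  have he : e ∉ p := fun h => u.2 ((Ideal.mem_iff_of_comap_eq hp hc.symm ht het).mpr h)
  refine ⟨IsLocalization.mk' _ (a * (1 + t)) (⟨e * (1 + s), p.primeCompl.mul_mem he (hp s hs)⟩ :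
    p.primeCompl), ?_⟩
  rw [Localization.localRingHom_mk', IsLocalization.mk'_eq_iff_eq]
  congr 1
  calc (u : B) * g (a * (1 + t)) = (g (1 + t) * u) * g a := by rw [map_mul]; ring
    _ = g e * (g (1 + s) * b) := by rw [het, has]
    _ = g (e * (1 + s)) * b := by rw [map_mul]; ring

end RingHom.HasSumSqFractions

theorem biregular_real_lying_over_general {A : Type*} [CommRing A]
    (B : Subring (FractionRing A))
    (hBA : B ≤ (integralClosure A (FractionRing A)).toSubring)
    (hbireg : ringO (algebraMap A (FractionRing A)) = ringO B.subtype)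
    (g : A →+* B) (hg : ∀ a : A, ((g a : FractionRing A)) = algebraMap A (FractionRing A) a)
    (p : Ideal A) [hp : p.IsPrime] (hpr : IsRealIdeal p) :
    (∃! q : Ideal B, q.IsPrime ∧ q.comap g = p) ∧
    ∀ q : Ideal B, ∀ (hq : q.IsPrime), q.comap g = p →
      IsRealIdeal q ∧ ∀ (hc : p = q.comap g),
        Function.Bijective (@Localization.localRingHom A _ B _ p hp q hq g hc) := by
  have hcomp : B.subtype.comp g = algebraMap A (FractionRing A) := RingHom.ext hg
  have hinj : Function.Injective g := fun a b h =>
    IsFractionRing.injective A (FractionRing A) (by rw [← hg, ← hg, h])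
  have hint : g.IsIntegral := fun b =>
    .of_map Subtype.val_injective (hcomp ▸ hBA b.2 : (B.subtype.comp g).IsIntegralElem b)
  have hfrac : g.HasSumSqFractions := fun b => by
    obtain ⟨a, s, hs, h⟩ : (b : FractionRing A) ∈ ringO (algebraMap A (FractionRing A)) :=
      hbireg ▸ ⟨b, 0, IsSumSq.zero, by simp⟩
    exact ⟨a, s, hs, Subtype.val_injective (by simpa [hg] using h)⟩
  have hsos : ∀ s, IsSumSq s → 1 + s ∉ p := fun _ => hpr.one_add_notMem_s10 hp.ne_top
  obtain ⟨⟨q₀, hq₀⟩, hq₀p⟩ := hint.comap_surjective hinj ⟨p, hp⟩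
  have hq₀c : q₀.comap g = p := congrArg PrimeSpectrum.asIdeal hq₀p
  refine ⟨⟨q₀, ⟨hq₀, hq₀c⟩, fun q ⟨_, hqc⟩ => hfrac.eq_of_comap_eq hsos hqc hq₀c⟩, ?_⟩
  intro q hq hqc
  exact ⟨hfrac.isRealIdeal_of_comap_eq hpr hp.ne_top hqc, fun hc =>
    ⟨hfrac.localRingHom_injective hsos hc hinj, hfrac.localRingHom_surjective hsos hc⟩⟩

/-- Let `A` satisfy (MP), with total ring of fractions `K` and integral
closure `A'` in `K`, and let `A ⊆ B ⊆ A'` be a biregular extension, i.e. `O(A) = O(B)` as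
subrings of `K`. Then over every real prime ideal `p` of `A` there lies exactly one prime
ideal `q` of `B`; moreover any such `q` is a real ideal and the canonical homomorphism
`A_p → B_q` is an isomorphism (bijective). -/
theorem biregular_real_lying_over {A : Type*} [CommRing A] [IsReduced A]
    (hfin : (minimalPrimes A).Finite)
    (hreal : ∀ p ∈ minimalPrimes A, IsRealIdeal p)
    (B : Subring (FractionRing A))
    (hAB : (algebraMap A (FractionRing A)).range ≤ B)
    (hBA : B ≤ (integralClosure A (FractionRing A)).toSubring)
    (hbireg : ringO (algebraMap A (FractionRing A)) = ringO B.subtype)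
    (g : A →+* B) (hg : ∀ a : A, ((g a : FractionRing A)) = algebraMap A (FractionRing A) a)
    (p : Ideal A) [hp : p.IsPrime] (hpr : IsRealIdeal p) :
    (∃! q : Ideal B, q.IsPrime ∧ q.comap g = p) ∧
    ∀ q : Ideal B, ∀ (hq : q.IsPrime), q.comap g = p →
      IsRealIdeal q ∧ ∀ (hc : p = q.comap g),
        Function.Bijective (@Localization.localRingHom A _ B _ p hp q hq g hc) :=
  biregular_real_lying_over_general B hBA hbireg g hg p (hp := hp) hpr
end

section
/- Let A be a commutative ring and O(A) = (1+ΣA²)⁻¹A its localization at the multiplicative subset of elements of the form 1 plus a sum of squares. Then every element of O(A) of the form 1 + s, where s is a sum of squares of elements of O(A), is a unit of O(A). -/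
theorem IsLocalization.exists_mul_self_mul_eq_algebraMap_of_isSumSq {A S : Type*} [CommRing A]
    [CommRing S] [Algebra A S] {M : Submonoid A} [IsLocalization M S] {s : S} (hs : IsSumSq s) :
    ∃ d ∈ M, ∃ t, IsSumSq t ∧ algebraMap A S (d * d) * s = algebraMap A S t := by
  induction hs with
  | zero => exact ⟨1, M.one_mem, 0, IsSumSq.zero, by simp⟩
  | @sq_add x s _ ih =>
    obtain ⟨d, hd, t, ht, hdt⟩ := ih
    obtain ⟨⟨b, m⟩, rfl⟩ := IsLocalization.mk'_surjective M x
    refine ⟨d * m, M.mul_mem hd m.2, d * b * (d * b) + m * m * t,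
      IsSumSq.sq_add _ (isSumSq_sq_mul _ ht), ?_⟩
    have hb := IsLocalization.mk'_spec S b m
    simp only [map_mul, map_add] at hdt hb ⊢
    linear_combination
      (algebraMap A S d * algebraMap A S d *
        (IsLocalization.mk' S b m * algebraMap A S m + algebraMap A S b)) * hb +
      (algebraMap A S m * algebraMap A S m) * hdt

/-- In `O(A) = (1+ΣA²)⁻¹A`, every element of the form `1 + s`, with `s` a
sum of squares of elements of `O(A)`, is a unit. -/
theorem isUnit_one_add_isSumSq_ringOfRegular {A : Type*} [CommRing A]
    (s : Localization (oneAddSumSq A)) (hs : IsSumSq s) :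
    IsUnit (1 + s) := by
  obtain ⟨d, hd, t, ht, hdt⟩ :=
    IsLocalization.exists_mul_self_mul_eq_algebraMap_of_isSumSq (M := oneAddSumSq A) hs
  have hmem : d * d + t ∈ oneAddSumSq A := add_mem_oneAddSumSq (mul_mem hd hd) ht
  have hmul : algebraMap A _ (d * d) * (1 + s) = algebraMap A _ (d * d + t) := by
    rw [mul_add, mul_one, hdt, map_add]
  exact isUnit_of_mul_isUnit_right
    (hmul ▸ IsLocalization.map_units (Localization (oneAddSumSq A)) ⟨_, hmem⟩)
end

section
/- Let X ⊆ ℝⁿ be an irreducible real algebraic set, i.e. X = Z(I(X)) where I(X) ⊆ ℝ[x₁, …, xₙ], the ideal of all polynomials vanishing on X, is a prime ideal, and let A = ℝ[x₁, …, xₙ]/I(X) be its ring of polynomial functions, an integral domain with fraction field F. For x ∈ X set m_x = {f ∈ A : f(x) = 0}, and let S = {f ∈ A : f(x) ≠ 0 for all x ∈ X}. Then, as subrings of F, the ring of regular functions O(X) = S⁻¹A equals the intersection ⋂_{x ∈ X} A_{m_x} of the localizations of A at the maximal ideals of the points of X. -/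
/-!
The denominators of `ξ` form an ideal of the Noetherian ring `A`. If `g₁, …, g_k` generate it,
then `∑ gᵢ²` is again a denominator, and since `ℝ` is formally real it vanishes at a point only
where every denominator does, which the local hypothesis rules out at each point of `X`.
-/

open Finset

namespace IsFormallyReal

variable {R : Type*} [NonUnitalNonAssocSemiring R] [IsFormallyReal R]

theorem eq_zero_of_mul_self_eq_zero {a : R} (h : a * a = 0) : a = 0 := by
  by_contra ha
  exact not_isSumNonzeroSq_zero (h ▸ IsSumNonzeroSq.sq ha)

theorem eq_zero_of_sum_mul_self_eq_zero {ι : Type*} {s : Finset ι} {f : ι → R}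
    (h : ∑ i ∈ s, f i * f i = 0) {i : ι} (hi : i ∈ s) : f i = 0 := by
  classical
  rw [← add_sum_erase s _ hi] at h
  exact eq_zero_of_mul_self_eq_zero
    (eq_zero_of_add_right (IsSumSq.mul_self _) (IsSumSq.sum_mul_self _ _) h)

end IsFormallyReal

theorem Ideal.FG.exists_mem_le_ker_of_map_eq_zero {R : Type*} [CommSemiring R] {J : Ideal R}
    (hJ : J.FG) (K : Type*) [Semiring K] [IsFormallyReal K] :
    ∃ b ∈ J, ∀ f : R →+* K, f b = 0 → J ≤ RingHom.ker f := by
  obtain ⟨s, rfl⟩ := hJ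
  refine ⟨∑ g ∈ s, g * g, Ideal.sum_mem _ fun g hg ↦ mul_mem_left _ _ (subset_span hg),
    fun f hf ↦ ?_⟩
  simp only [map_sum, map_mul] at hf
  exact span_le.mpr fun g hg ↦ IsFormallyReal.eq_zero_of_sum_mul_self_eq_zero hf hg

theorem Submodule.mem_one_colon_singleton {R S : Type*} [CommSemiring R] [Semiring S]
    [Algebra R S] {ξ : S} {b : R} :
    b ∈ (1 : Submodule R S).colon {ξ} ↔ ∃ a, algebraMap R S b * ξ = algebraMap R S a := by
  simp only [mem_colon_singleton, mem_one, Algebra.smul_def, eq_comm]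

theorem exists_denominator_forall_ne_zero_of_forall_exists_denominator {R S K ι : Type*}
    [CommSemiring R] [IsNoetherianRing R] [Semiring S] [Algebra R S] [Semiring K]
    [IsFormallyReal K] (ev : ι → R →+* K) {ξ : S}
    (h : ∀ i, ∃ a b, ev i b ≠ 0 ∧ algebraMap R S b * ξ = algebraMap R S a) :
    ∃ a b, (∀ i, ev i b ≠ 0) ∧ algebraMap R S b * ξ = algebraMap R S a := by
  set D := (1 : Submodule R S).colon {ξ}
  obtain ⟨b, hbD, hb⟩ := Ideal.FG.exists_mem_le_ker_of_map_eq_zero (IsNoetherian.noetherian D) K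
  obtain ⟨a, hab⟩ := Submodule.mem_one_colon_singleton.mp hbD
  refine ⟨a, b, fun i hi ↦ ?_, hab⟩
  obtain ⟨a', b', hb', hab'⟩ := h i
  exact hb' (hb (ev i) hi (Submodule.mem_one_colon_singleton.mpr ⟨a', hab'⟩))

theorem ringOfRegular_eq_iInter_localizations_at_points_general {n : ℕ}
    (X : Set (Fin n → ℝ)) (I : Ideal (MvPolynomial (Fin n) ℝ))
    (hX : ∀ x : Fin n → ℝ, x ∈ X ↔ ∀ f ∈ I, MvPolynomial.eval x f = 0) :
    {ξ : FractionRing (MvPolynomial (Fin n) ℝ ⧸ I) |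
      ∃ a b : MvPolynomial (Fin n) ℝ ⧸ I,
        (∀ (x : Fin n → ℝ) (hx : x ∈ X),
          Ideal.Quotient.lift I (MvPolynomial.eval x) ((hX x).mp hx) b ≠ 0) ∧
        algebraMap (MvPolynomial (Fin n) ℝ ⧸ I) (FractionRing (MvPolynomial (Fin n) ℝ ⧸ I)) b
            * ξ =
          algebraMap (MvPolynomial (Fin n) ℝ ⧸ I)
            (FractionRing (MvPolynomial (Fin n) ℝ ⧸ I)) a} =
    {ξ : FractionRing (MvPolynomial (Fin n) ℝ ⧸ I) |
      ∀ (x : Fin n → ℝ) (hx : x ∈ X),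
        ∃ a b : MvPolynomial (Fin n) ℝ ⧸ I,
          Ideal.Quotient.lift I (MvPolynomial.eval x) ((hX x).mp hx) b ≠ 0 ∧
          algebraMap (MvPolynomial (Fin n) ℝ ⧸ I)
              (FractionRing (MvPolynomial (Fin n) ℝ ⧸ I)) b * ξ =
            algebraMap (MvPolynomial (Fin n) ℝ ⧸ I)
              (FractionRing (MvPolynomial (Fin n) ℝ ⧸ I)) a} := by
  ext ξ
  constructor
  · rintro ⟨a, b, hb, hab⟩ x hx
    exact ⟨a, b, hb x hx, hab⟩
  · intro h
    obtain ⟨a, b, hb, hab⟩ := exists_denominator_forall_ne_zero_of_forall_exists_denominator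
      (fun x : X ↦ Ideal.Quotient.lift I (MvPolynomial.eval x.1) ((hX x).mp x.2))
      fun x ↦ h x x.2
    exact ⟨a, b, fun x hx ↦ hb ⟨x, hx⟩, hab⟩

/-- Let `X ⊆ ℝⁿ` be an irreducible real algebraic set: `I = I(X)` is the
(prime) ideal of polynomials vanishing on `X` and `X = Z(I)`. Let `A = ℝ[x₁,…,xₙ]/I` be
its ring of polynomial functions, with fraction field `F`, and for `x ∈ X` let
`m_x = {f ∈ A : f(x) = 0}`. Then, inside `F`, the ring of regular functions
`O(X) = S⁻¹A` — where `S` is the set of polynomial functions vanishing nowhere on `X` —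
equals the intersection `⋂_{x ∈ X} A_{m_x}` of the localizations of `A` at the maximal
ideals of the points of `X`. Fractions `ξ = a/b` of `F` are encoded by the relation
`b · ξ = a`. -/
theorem ringOfRegular_eq_iInter_localizations_at_points {n : ℕ}
    (X : Set (Fin n → ℝ)) (I : Ideal (MvPolynomial (Fin n) ℝ))
    (hI : ∀ f : MvPolynomial (Fin n) ℝ, f ∈ I ↔ ∀ x ∈ X, MvPolynomial.eval x f = 0)
    (hprime : I.IsPrime)
    (hX : ∀ x : Fin n → ℝ, x ∈ X ↔ ∀ f ∈ I, MvPolynomial.eval x f = 0) :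
    {ξ : FractionRing (MvPolynomial (Fin n) ℝ ⧸ I) |
      ∃ a b : MvPolynomial (Fin n) ℝ ⧸ I,
        (∀ (x : Fin n → ℝ) (hx : x ∈ X),
          Ideal.Quotient.lift I (MvPolynomial.eval x) ((hX x).mp hx) b ≠ 0) ∧
        algebraMap (MvPolynomial (Fin n) ℝ ⧸ I) (FractionRing (MvPolynomial (Fin n) ℝ ⧸ I)) b
            * ξ =
          algebraMap (MvPolynomial (Fin n) ℝ ⧸ I)
            (FractionRing (MvPolynomial (Fin n) ℝ ⧸ I)) a} =
    {ξ : FractionRing (MvPolynomial (Fin n) ℝ ⧸ I) |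
      ∀ (x : Fin n → ℝ) (hx : x ∈ X),
        ∃ a b : MvPolynomial (Fin n) ℝ ⧸ I,
          Ideal.Quotient.lift I (MvPolynomial.eval x) ((hX x).mp hx) b ≠ 0 ∧
          algebraMap (MvPolynomial (Fin n) ℝ ⧸ I)
              (FractionRing (MvPolynomial (Fin n) ℝ ⧸ I)) b * ξ =
            algebraMap (MvPolynomial (Fin n) ℝ ⧸ I)
              (FractionRing (MvPolynomial (Fin n) ℝ ⧸ I)) a} :=
  ringOfRegular_eq_iInter_localizations_at_points_general X I hX
end
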